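/- Every 2-connected graph with circumference t contains no path with ⌈t²/2⌉ edges; consequently it has pathwidth at most ⌈t²/2⌉ − 1. -/

import Mathlib

open SimpleGraph

universe u v

section Defs

variable {V : Type u} {W : Type v}

/-- A path decomposition of `G`: a sequence of bags covering all edges and vertices,
with each vertex appearing in a consecutive interval of bags. -/
structure PathDecomp (G : SimpleGraph V) where
  n : ℕ
  bag : Fin (n + 1) → Finset V
  cov_edge : ∀ ⦃u w : V⦄, G.Adj u w → ∃ i, u ∈ bag i ∧ w ∈ bag i
  cov_vert : ∀ x : V, ∃ i, x ∈ bag i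
  interval : ∀ (x : V) (i j k : Fin (n + 1)), i ≤ j → j ≤ k →
    x ∈ bag i → x ∈ bag k → x ∈ bag j

/-- The pathwidth of `G` is at most `w`. -/
def pwLE (G : SimpleGraph V) (w : ℕ) : Prop :=
  ∃ D : PathDecomp G, ∀ i, (D.bag i).card ≤ w + 1

/-- The rooted pathwidth of `G` at `x` is at most `r`: there is a path decomposition
of width `≤ r` whose last bag contains `x`. -/
def rpwLE (G : SimpleGraph V) (x : V) (r : ℕ) : Prop :=
  ∃ D : PathDecomp G, x ∈ D.bag (Fin.last D.n) ∧ ∀ i, (D.bag i).card ≤ r + 1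

/-- The rooted pathwidth of `G` at `x`. -/
noncomputable def rpw (G : SimpleGraph V) (x : V) : ℕ := sInf {r | rpwLE G x r}

/-- `G` has a cycle of length `n`. -/
def HasCycleLen (G : SimpleGraph V) (n : ℕ) : Prop :=
  ∃ (x : V) (c : G.Walk x x), c.IsCycle ∧ c.length = n

/-- The circumference of `G` equals `t` (it is `0` if `G` is acyclic). -/
def CircumEq (G : SimpleGraph V) (t : ℕ) : Prop :=
  (∀ n, HasCycleLen G n → n ≤ t) ∧ (t = 0 ∨ HasCycleLen G t)

/-- `G` is `k`-connected: it has more than `k` vertices and stays connected after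
deleting any set of fewer than `k` vertices. -/
def KConn (G : SimpleGraph V) (k : ℕ) : Prop :=
  k < Nat.card V ∧
  ∀ S : Set V, S.Finite → S.ncard < k → (G.induce Sᶜ).Connected

/-- `G` has `k` pairwise vertex-disjoint cycles, each of length at least `t`. -/
def HasKDisjointCyclesLen (G : SimpleGraph V) (k t : ℕ) : Prop :=
  ∃ c : Fin k → Σ x : V, G.Walk x x,
    (∀ m, (c m).2.IsCycle ∧ t ≤ (c m).2.length) ∧
    ∀ m m', m ≠ m' → List.Disjoint (c m).2.support (c m').2.support

/-- `H` is a minor of `G`, witnessed by branch sets `br`. -/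
def IsMinorWithBranch (G : SimpleGraph V) (H : SimpleGraph W) (br : W → Set V) : Prop :=
  (∀ w, (G.induce (br w)).Connected) ∧
  (∀ w w', w ≠ w' → Disjoint (br w) (br w')) ∧
  (∀ ⦃w w'⦄, H.Adj w w' → ∃ u ∈ br w, ∃ u' ∈ br w', G.Adj u u')

/-- `H` is a minor of `G`. -/
def HasMinor (G : SimpleGraph V) (H : SimpleGraph W) : Prop :=
  ∃ br : W → Set V, IsMinorWithBranch G H br



/-- A rooted forest on `V`, given by a parent function together with a consistent
height function (the height of a vertex is its distance to the root of its component). -/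
structure RootedForest (V : Type u) where
  parent : V → Option V
  height : V → ℕ
  height_root : ∀ x, parent x = none → height x = 0
  height_child : ∀ ⦃x y⦄, parent x = some y → height x = height y + 1

/-- `x` is an ancestor of `y` (possibly `x = y`). -/
def RootedForest.Ancestor (F : RootedForest V) (x y : V) : Prop :=
  Relation.ReflTransGen (fun a b => F.parent a = some b) y x

/-- `x` is a proper ancestor of `y`. -/
def RootedForest.ProperAncestor (F : RootedForest V) (x y : V) : Prop :=
  Relation.TransGen (fun a b => F.parent a = some b) y x

/-- The treedepth of `G` is at most `d`: there is a rooted forest of height at most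
`d - 1` on `V(G)` whose closure contains `G`. -/
def treedepthLE (G : SimpleGraph V) (d : ℕ) : Prop :=
  ∃ F : RootedForest V, (∀ x, F.height x + 1 ≤ d) ∧
    ∀ ⦃x y⦄, G.Adj x y → F.ProperAncestor x y ∨ F.ProperAncestor y x

/-- Vertices of the complete binary tree of height `h`: binary strings of length at
most `h`; the parent of a nonempty string is its tail, the root is the empty string. -/
abbrev CBTVert (h : ℕ) := {l : List Bool // l.length ≤ h}

/-- The complete binary tree of height `h` as a simple graph. -/
def CBT (h : ℕ) : SimpleGraph (CBTVert h) where
  Adj u w := (∃ b, u.val = b :: w.val) ∨ (∃ b, w.val = b :: u.val)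
  symm := ⟨by intro u w hv; tauto⟩
  loopless := by
    constructor
    rintro u (⟨b, hb⟩ | ⟨b, hb⟩) <;>
    · have := congrArg List.length hb
      simp at this

/-- The root of the complete binary tree. -/
def CBTroot (h : ℕ) : CBTVert h := ⟨[], by simp⟩

/-- The `m`-th leaf (in left-to-right order) of the complete binary tree of
height `h`: the binary string of length `h` whose bits are the binary digits of `m`,
most significant first. -/
def leafIdx (h : ℕ) (m : Fin (2 ^ h)) : CBTVert h :=
  ⟨(List.range h).map fun i => m.val.testBit (h - 1 - i), by simp⟩

/-- The graph obtained from `G` by adding `k` dominant vertices. -/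
def addDominant (G : SimpleGraph V) (k : ℕ) : SimpleGraph (V ⊕ Fin k) where
  Adj x y := (∃ a b, x = .inl a ∧ y = .inl b ∧ G.Adj a b) ∨
             (∃ a c, x = .inl a ∧ y = .inr c) ∨
             (∃ c a, x = .inr c ∧ y = .inl a) ∨
             (∃ c c', x = .inr c ∧ y = .inr c' ∧ c ≠ c')
  symm := by
    constructor
    rintro x y (⟨a,b,rfl,rfl,hab⟩|⟨a,c,rfl,rfl⟩|⟨c,a,rfl,rfl⟩|⟨c,c',rfl,rfl,hcc⟩)
    · exact Or.inl ⟨b,a,rfl,rfl,hab.symm⟩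
    · exact Or.inr (Or.inr (Or.inl ⟨c,a,rfl,rfl⟩))
    · exact Or.inr (Or.inl ⟨a,c,rfl,rfl⟩)
    · exact Or.inr (Or.inr (Or.inr ⟨c',c,rfl,rfl,hcc.symm⟩))
  loopless := by
    constructor
    rintro x (⟨a,b,rfl,h,hab⟩|⟨a,c,rfl,h⟩|⟨c,a,rfl,h⟩|⟨c,c',rfl,h,hcc⟩)
    · cases Sum.inl.inj h; exact G.irrefl hab
    · simp at h
    · simp at h
    · cases Sum.inr.inj h; exact hcc rfl

/-- The minimum size of a transversal of `G` (a set of vertices meeting all cycles). -/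
noncomputable def tau (G : SimpleGraph V) : ℕ :=
  sInf {n | ∃ S : Set V, S.ncard = n ∧ (G.induce Sᶜ).IsAcyclic}

/-- `x` is a cut-vertex of `G`. -/
def IsCutVertex (G : SimpleGraph V) (x : V) : Prop :=
  ∃ (u w : V) (hu : u ≠ x) (hw : w ≠ x),
    G.Reachable u w ∧ ¬ (G.induce {y | y ≠ x}).Reachable ⟨u, hu⟩ ⟨w, hw⟩

/-- A block of `G`: a maximal 2-connected subgraph, or a bridge edge,
or an isolated vertex. -/
def IsBlock (G : SimpleGraph V) (B : G.Subgraph) : Prop :=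
  (KConn B.coe 2 ∧ ∀ B' : G.Subgraph, B ≤ B' → KConn B'.coe 2 → B' = B) ∨
  (∃ (u w : V) (huw : G.Adj u w), G.IsBridge s(u, w) ∧ B = G.subgraphOfAdj huw) ∨
  (∃ x : V, (∀ u, ¬ G.Adj x u) ∧ B = G.singletonSubgraph x)

/-- The block-cut-forest of `G`: vertices are the cut-vertices and the blocks of `G`,
with a cut-vertex adjacent to exactly the blocks containing it. -/
def BCF (G : SimpleGraph V) :
    SimpleGraph ({x : V // IsCutVertex G x} ⊕ {B : G.Subgraph // IsBlock G B}) where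
  Adj x y := (∃ v B, x = .inl v ∧ y = .inr B ∧ v.val ∈ B.val.verts) ∨
             (∃ v B, x = .inr B ∧ y = .inl v ∧ v.val ∈ B.val.verts)
  symm := by
    constructor
    rintro x y (⟨v,B,rfl,rfl,hm⟩|⟨v,B,rfl,rfl,hm⟩)
    · exact Or.inr ⟨v,B,rfl,rfl,hm⟩
    · exact Or.inl ⟨v,B,rfl,rfl,hm⟩
  loopless := by
    constructor
    rintro x (⟨v,B,rfl,h,_⟩|⟨v,B,rfl,h,_⟩) <;> simp at h

/-- The octahedron `K_{2,2,2}` minus the edges of a triangle: parts are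
`{i} × {0,1}`; the deleted triangle consists of the vertices `(i, 0)`. -/
def Qgraph : SimpleGraph (Fin 3 × Fin 2) where
  Adj x y := x.1 ≠ y.1 ∧ ¬(x.2 = 0 ∧ y.2 = 0)
  symm := ⟨fun x y h => ⟨h.1.symm, fun hc => h.2 ⟨hc.2, hc.1⟩⟩⟩
  loopless := ⟨fun x h => h.1 rfl⟩

/-- The disjoint union of two triangles. -/
def TwoTriangles : SimpleGraph (Fin 3 ⊕ Fin 3) where
  Adj x y := (∃ a b, x = .inl a ∧ y = .inl b ∧ a ≠ b) ∨
             (∃ a b, x = .inr a ∧ y = .inr b ∧ a ≠ b)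
  symm := by
    constructor
    rintro x y (⟨a,b,rfl,rfl,hab⟩|⟨a,b,rfl,rfl,hab⟩)
    · exact Or.inl ⟨b,a,rfl,rfl,hab.symm⟩
    · exact Or.inr ⟨b,a,rfl,rfl,hab.symm⟩
  loopless := by
    constructor
    rintro x (⟨a,b,rfl,h,hab⟩|⟨a,b,rfl,h,hab⟩) <;>
    · first
      | (cases Sum.inl.inj h; exact hab rfl)
      | (cases Sum.inr.inj h; exact hab rfl)

/-- `A` contains a subdivision of `B` as a subgraph: branch vertices are given by an
injective map `f`, and each edge of `B` is replaced by a path in `A`; distinct edges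
give internally disjoint paths, and no branch vertex lies in the interior of a path. -/
def ContainsSubdivision (A : SimpleGraph V) (B : SimpleGraph W) : Prop :=
  ∃ (f : W → V) (P : ∀ ⦃u w : W⦄, B.Adj u w → A.Walk (f u) (f w)),
    Function.Injective f ∧
    (∀ ⦃u w : W⦄ (h : B.Adj u w), (P h).IsPath) ∧
    (∀ ⦃u w : W⦄ (h : B.Adj u w) (x : W), f x ∈ (P h).support → x = u ∨ x = w) ∧
    (∀ ⦃u w x y : W⦄ (h : B.Adj u w) (h' : B.Adj x y), s(u, w) ≠ s(x, y) →
      ∀ z, z ∈ (P h).support → z ∈ (P h').support →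
        z ∈ ({f u, f w} : Set V) ∩ {f x, f y})

end Defs

/-!
Let `P` be a path in a 2-connected graph all of whose cycles have length at most `t`. The ends of
`P` lie on a common cycle `C` of length `q ≤ t`, and `C` cuts `P` into at most `q - 1` segments
meeting `C` only at their ends. A segment together with the longer arc of `C` between its ends is
a cycle, so every segment has length at most `t - ⌈q / 2⌉`, and `2 |P| ≤ 2 (q - 1) (t - ⌈q / 2⌉)`,
which is at most `t² - t`.

If every path starting at `r` has at most `d` edges, a path decomposition of width `d` is built
recursively: delete `r`, decompose each component of what is left, rooted at a neighbour of `r`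
(from which paths are shorter), add `r` to every bag and concatenate.
-/

namespace List

variable {α : Type*} {L : List α} {d : α} {i : ℕ}

theorem lt_length_of_getD_ne (h : L.getD i d ≠ d) : i < L.length := by
  by_contra! hi
  exact h (getD_eq_default _ _ hi)

theorem getD_mem (hi : i < L.length) : L.getD i d ∈ L := by
  rw [getD_eq_getElem _ _ hi]
  exact getElem_mem hi

theorem exists_getD_eq {b : α} (hb : b ∈ L) : ∃ i < L.length, L.getD i d = b := by
  obtain ⟨i, hi, rfl⟩ := getElem_of_mem hb
  exact ⟨i, hi, getD_eq_getElem _ _ hi⟩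

end List

section BagsInterval

variable {V : Type*} {L L₁ L₂ : List (Finset V)}

/-- Indices past the end of `L` read the empty bag, so no range conditions are needed. -/
def BagsInterval (L : List (Finset V)) : Prop :=
  ∀ ⦃x : V⦄ ⦃i j k : ℕ⦄, i ≤ j → j ≤ k → x ∈ L.getD i ∅ → x ∈ L.getD k ∅ → x ∈ L.getD j ∅

theorem bagsInterval_singleton (b : Finset V) : BagsInterval [b] := by
  intro x i j k hij hjk _ hk
  have : k < 1 := List.lt_length_of_getD_ne (Finset.ne_empty_of_mem hk)
  obtain rfl : j = k := by omega
  exact hk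

theorem BagsInterval.append (h₁ : BagsInterval L₁) (h₂ : BagsInterval L₂)
    (h : ∀ x, (∃ b ∈ L₁, x ∈ b) → (∃ b ∈ L₂, x ∈ b) → ∀ b ∈ L₁ ++ L₂, x ∈ b) :
    BagsInterval (L₁ ++ L₂) := by
  intro x i j k hij hjk hi hk
  have hkL := List.lt_length_of_getD_ne (Finset.ne_empty_of_mem hk)
  rw [List.length_append] at hkL
  rcases lt_or_ge k L₁.length with hk₁ | hk₁
  · rw [List.getD_append _ _ _ _ (by omega)] at hi hk ⊢
    exact h₁ hij hjk hi hk
  rcases lt_or_ge i L₁.length with hi₁ | hi₁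
  · rw [List.getD_append _ _ _ _ hi₁] at hi
    rw [List.getD_append_right _ _ _ _ hk₁] at hk
    exact h x ⟨_, List.getD_mem hi₁, hi⟩ ⟨_, List.getD_mem (by omega), hk⟩ _
      (List.getD_mem (by rw [List.length_append]; omega))
  · rw [List.getD_append_right _ _ _ _ hi₁] at hi
    rw [List.getD_append_right _ _ _ _ hk₁] at hk
    rw [List.getD_append_right _ _ _ _ (by omega)]
    exact h₂ (by omega) (by omega) hi hk

theorem BagsInterval.map_insert [DecidableEq V] (h : BagsInterval L) (ρ : V) :
    BagsInterval (L.map (insert ρ)) := by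
  intro x i j k hij hjk hi hk
  have hkL : k < L.length := by simpa using List.lt_length_of_getD_ne (Finset.ne_empty_of_mem hk)
  have hget : ∀ n < L.length, (L.map (insert ρ)).getD n ∅ = insert ρ (L.getD n ∅) := by
    intro n hn
    simp [List.getD_eq_getElem?_getD, hn]
  rw [hget i (by omega), Finset.mem_insert] at hi
  rw [hget k hkL, Finset.mem_insert] at hk
  rw [hget j (by omega), Finset.mem_insert]
  exact hi.elim Or.inl fun hi => hk.elim Or.inl fun hk => Or.inr (h hij hjk hi hk)

end BagsInterval

namespace SimpleGraph

variable {V : Type*} {G : SimpleGraph V}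

namespace Walk

variable {a b c u v w x : V}

theorem IsPath.start_notMem_support_tail {p : G.Walk u v} (hp : p.IsPath) :
    u ∉ p.support.tail := by
  have := hp.support_nodup
  rw [← p.cons_tail_support, List.nodup_cons] at this
  exact this.1

theorem IsPath.append {p : G.Walk u v} {q : G.Walk v w} (hp : p.IsPath) (hq : q.IsPath)
    (h : ∀ y ∈ p.support, y ∈ q.support → y = v) : (p.append q).IsPath := by
  rw [isPath_def, support_append, List.nodup_append]
  refine ⟨hp.support_nodup, hq.support_nodup.sublist (List.tail_sublist _), ?_⟩
  rintro y hyp _ hyq rfl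
  exact hq.start_notMem_support_tail (h y hyp (List.mem_of_mem_tail hyq) ▸ hyq)

theorem exists_isPath_first_mem [DecidableEq V] (p : G.Walk u v) {S : Set V} (hv : v ∈ S) :
    ∃ x ∈ S, ∃ q : G.Walk u x, q.IsPath ∧ q.support ⊆ p.support ∧
      ∀ y ∈ q.support, y ∈ S → y = x := by
  suffices ∃ x ∈ S, ∃ q : G.Walk u x, q.support ⊆ p.support ∧ ∀ y ∈ q.support, y ∈ S → y = x by
    obtain ⟨x, hx, q, hqp, hqS⟩ := this
    exact ⟨x, hx, q.bypass, q.bypass_isPath, List.Subset.trans q.support_bypass_subset_support hqp,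
      fun y hy => hqS y (q.support_bypass_subset_support hy)⟩
  induction p with
  | nil => exact ⟨_, hv, nil, by simp, by simp⟩
  | @cons u u' v h p ih =>
    by_cases hu : u ∈ S
    · exact ⟨u, hu, nil, by simp, by simp⟩
    obtain ⟨x, hx, q, hqp, hqS⟩ := ih hv
    refine ⟨x, hx, cons h q, ?_, ?_⟩
    · rw [support_cons, support_cons]
      exact List.cons_subset_cons u hqp
    · simp only [support_cons, List.mem_cons, forall_eq_or_imp]
      exact ⟨fun h => absurd h hu, hqS⟩

theorem IsCycle.exists_arcs [DecidableEq V] {C : G.Walk x x} (hC : C.IsCycle) {a c : V}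
    (ha : a ∈ C.support) (hc : c ∈ C.support) (hac : a ≠ c) :
    ∃ (A₁ : G.Walk a c) (A₂ : G.Walk c a), A₁.IsPath ∧ A₂.IsPath ∧
      A₁.length + A₂.length = C.length ∧ ∀ y, y ∈ C.support ↔ y ∈ A₁.support ∨ y ∈ A₂.support := by
  have hc' : c ∈ (C.rotate a ha).support := (C.mem_support_rotate_iff a ha).2 hc
  have hrot : (C.rotate a ha).IsCycle := hC.rotate ha
  have hspec := (C.rotate a ha).take_spec hc'
  refine ⟨_, _, hrot.isPath_takeUntil hc',
    (hspec ▸ hrot).isPath_of_append_right (not_nil_of_ne hac), ?_, fun y => ?_⟩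
  · rw [← length_append, hspec, length_rotate]
  · rw [← mem_support_append_iff, hspec, mem_support_rotate_iff]

theorem IsCycle.length_add_half_le {t : ℕ}
    (hmax : ∀ y (D : G.Walk y y), D.IsCycle → D.length ≤ t) {C : G.Walk x x} (hC : C.IsCycle)
    {Q : G.Walk a c} (hQ : Q.IsPath) (ha : a ∈ C.support) (hc : c ∈ C.support)
    (hint : ∀ y ∈ Q.support, y ∈ C.support → y = a ∨ y = c) :
    Q.length + (C.length + 1) / 2 ≤ t := by
  classical
  have hCt := hmax x C hC
  rcases eq_or_ne a c with rfl | hac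
  · rw [(isPath_iff_nil.1 hQ).length_eq_zero]
    omega
  obtain ⟨A₁, A₂, hA₁, hA₂, hlen, hmem⟩ := hC.exists_arcs ha hc hac
  -- close `Q` up with the longer of the two arcs
  obtain ⟨A, hA, hAC, hAlen⟩ : ∃ A : G.Walk c a, A.IsPath ∧ (∀ y ∈ A.support, y ∈ C.support) ∧
      C.length ≤ 2 * A.length := by
    rcases le_total A₁.length A₂.length with h | h
    · exact ⟨A₂, hA₂, fun y hy => (hmem y).2 (Or.inr hy), by omega⟩
    · refine ⟨A₁.reverse, hA₁.reverse, fun y hy => (hmem y).2 (Or.inl (by simpa using hy)), ?_⟩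
      rw [length_reverse]
      omega
  have hdisj : Q.support.tail.Disjoint A.support.tail := fun y hyQ hyA =>
    (hint y (List.mem_of_mem_tail hyQ) (hAC y (List.mem_of_mem_tail hyA))).elim
      (fun h => hQ.start_notMem_support_tail (h ▸ hyQ))
      (fun h => hA.start_notMem_support_tail (h ▸ hyA))
  have hcyc := hQ.isCycle_append hA hdisj (Or.inr (by have := hC.three_le_length; omega))
  have := hmax a _ hcyc
  rw [length_append] at this
  omega

section Segments

variable {S : Set V} [DecidablePred (· ∈ S)] {m : ℕ}

theorem length_add_length_le_of_segments
    (hseg : ∀ ⦃a c⦄ (Q : G.Walk a c), Q.IsPath → a ∈ S → c ∈ S →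
      (∀ y ∈ Q.support, y ∈ S → y = a ∨ y = c) → Q.length ≤ m)
    (Q : G.Walk c a) (P : G.Walk a b) (hQP : (Q.append P).IsPath) (hc : c ∈ S) (hb : b ∈ S)
    (hQ : ∀ y ∈ Q.support, y ∈ S → y = c ∨ y = a) :
    Q.length + P.length ≤ P.support.countP (· ∈ S) * m := by
  induction P generalizing c with
  | nil =>
    have := hseg Q (by simpa using hQP) hc hb hQ
    simpa [hb] using this
  | @cons a a' b h P ih =>
    by_cases ha : a ∈ S
    · have hQm := hseg Q hQP.of_append_left hc ha hQ
      have hP := ih h.toWalk (by simpa using hQP.of_append_right) ha hb (by simp)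
      simp only [length_cons, support_cons, List.countP_cons, ha, decide_true, if_true,
        Adj.toWalk, length_nil] at hP ⊢
      nlinarith
    · have hP := ih (Q.concat h) (by rwa [concat_append]) hc hb (by
        simp only [support_concat, List.mem_append, List.mem_singleton]
        rintro y (hy | rfl) hyS
        · exact Or.inl ((hQ y hy hyS).resolve_right fun h => ha (h ▸ hyS))
        · exact Or.inr rfl)
      simp only [length_cons, support_cons, List.countP_cons, ha, decide_false, length_concat,
        Bool.false_eq_true, if_false, add_zero] at hP ⊢
      omega

theorem IsPath.length_le_of_segments
    (hseg : ∀ ⦃a c⦄ (Q : G.Walk a c), Q.IsPath → a ∈ S → c ∈ S →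
      (∀ y ∈ Q.support, y ∈ S → y = a ∨ y = c) → Q.length ≤ m)
    {P : G.Walk a b} (hP : P.IsPath) (ha : a ∈ S) (hb : b ∈ S) :
    P.length ≤ (P.support.countP (· ∈ S) - 1) * m := by
  cases P with
  | nil => simp
  | cons h P =>
    have := length_add_length_le_of_segments hseg h.toWalk P (by simpa using hP) ha hb (by simp)
    simp only [Adj.toWalk, length_cons, length_nil] at this
    simpa [List.countP_cons, ha, add_comm] using this

end Segments

theorem IsPath.countP_mem_support_le [DecidableEq V] {P : G.Walk a b} (hP : P.IsPath)
    {C : G.Walk x x} (hC : C.IsCycle) : P.support.countP (· ∈ C.support) ≤ C.length := by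
  rw [List.countP_eq_length_filter]
  have hsub : P.support.filter (· ∈ C.support) ⊆ C.support.tail := fun y hy => by
    have hy := of_decide_eq_true (List.mem_filter.1 hy).2
    rcases (C.mem_support_iff).1 hy with rfl | hy
    · exact end_mem_tail_support hC.not_nil
    · exact hy
  have := ((hP.support_nodup.filter _).subperm hsub).length_le
  rwa [List.length_tail, length_support, Nat.add_sub_cancel] at this

theorem IsCycle.exists_isCycle_of_adj [DecidableEq V] {C : G.Walk x x}
    (hC : C.IsCycle) (hu : u ∈ C.support) (hw : w ∈ C.support) (hwv : G.Adj w v)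
    (hv : v ∉ C.support) (R : G.Walk v u) (hR : w ∉ R.support) :
    ∃ y, ∃ D : G.Walk y y, D.IsCycle ∧ u ∈ D.support ∧ v ∈ D.support := by
  obtain ⟨z, hzC, R₁, hR₁, hR₁R, hR₁C⟩ := R.exists_isPath_first_mem (S := {y | y ∈ C.support}) hu
  have hzw : z ≠ w := fun h => hR (hR₁R (h ▸ R₁.end_mem_support))
  have hvz : v ≠ z := fun h => hv (h ▸ hzC)
  obtain ⟨A₁, A₂, hA₁, hA₂, -, hmem⟩ := hC.exists_arcs hzC hw hzw
  obtain ⟨A, hA, hAC, huA⟩ : ∃ A : G.Walk z w, A.IsPath ∧ (∀ y ∈ A.support, y ∈ C.support) ∧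
      u ∈ A.support := by
    rcases (hmem u).1 hu with h | h
    · exact ⟨A₁, hA₁, fun y hy => (hmem y).2 (Or.inl hy), h⟩
    · exact ⟨A₂.reverse, hA₂.reverse, fun y hy => (hmem y).2 (Or.inr (by simpa using hy)),
        by simpa using h⟩
  -- the cycle runs from `v` along `R` to `z`, around `C` through `u` to `w`, and back to `v`
  have hB : (R₁.append A).IsPath := hR₁.append hA fun y hy hyA => hR₁C y hy (hAC y hyA)
  refine ⟨v, (R₁.append A).append hwv.toWalk, hB.isCycle_append (IsPath.of_adj hwv) ?_ ?_,
    by simp [huA], by simp⟩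
  · simpa [Adj.toWalk] using hB.start_notMem_support_tail
  · have := not_nil_iff_lt_length.1 (not_nil_of_ne (p := R₁) hvz)
    have := not_nil_iff_lt_length.1 (not_nil_of_ne (p := A) hzw)
    left
    rw [length_append]
    omega

end Walk

section PathDecomposition

variable {L L₁ L₂ : List (Finset V)}

structure IsPathDecompOn (G : SimpleGraph V) (A : Finset V) (L : List (Finset V)) : Prop where
  subset : ∀ b ∈ L, b ⊆ A
  cov_vert : ∀ x ∈ A, ∃ b ∈ L, x ∈ b
  cov_edge : ∀ ⦃u w⦄, G.Adj u w → u ∈ A → w ∈ A → ∃ b ∈ L, u ∈ b ∧ w ∈ b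
  interval : BagsInterval L

variable {A B : Finset V}

theorem isPathDecompOn_empty : G.IsPathDecompOn ∅ [] where
  subset := by simp
  cov_vert := by simp
  cov_edge := by simp
  interval := by simp [BagsInterval]

theorem IsPathDecompOn.insert_root [DecidableEq V] (h : G.IsPathDecompOn A L) (ρ : V) :
    G.IsPathDecompOn (insert ρ A) ({ρ} :: L.map (insert ρ)) where
  subset := by
    simp only [List.mem_cons, List.mem_map]
    rintro _ (rfl | ⟨b, hb, rfl⟩)
    · simp
    · exact Finset.insert_subset_insert ρ (h.subset b hb)
  cov_vert := by
    intro x hx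
    rcases Finset.mem_insert.1 hx with rfl | hx
    · exact ⟨{x}, List.mem_cons_self, Finset.mem_singleton_self x⟩
    · obtain ⟨b, hb, hxb⟩ := h.cov_vert x hx
      exact ⟨insert ρ b, List.mem_cons_of_mem _ (List.mem_map_of_mem hb),
        Finset.mem_insert_of_mem hxb⟩
  cov_edge := by
    have root : ∀ ⦃w⦄, w ∈ A → ∃ b ∈ {ρ} :: L.map (insert ρ), ρ ∈ b ∧ w ∈ b := by
      intro w hw
      obtain ⟨b, hb, hwb⟩ := h.cov_vert w hw
      exact ⟨insert ρ b, List.mem_cons_of_mem _ (List.mem_map_of_mem hb),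
        Finset.mem_insert_self ρ b, Finset.mem_insert_of_mem hwb⟩
    intro u w huw hu hw
    rcases Finset.mem_insert.1 hu with rfl | huA
    · exact root ((Finset.mem_insert.1 hw).resolve_left huw.ne')
    rcases Finset.mem_insert.1 hw with rfl | hwA
    · obtain ⟨b, hb, hwb, hub⟩ := root huA
      exact ⟨b, hb, hub, hwb⟩
    obtain ⟨b, hb, hub, hwb⟩ := h.cov_edge huw huA hwA
    exact ⟨insert ρ b, List.mem_cons_of_mem _ (List.mem_map_of_mem hb),
      Finset.mem_insert_of_mem hub, Finset.mem_insert_of_mem hwb⟩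
  interval := by
    refine (bagsInterval_singleton {ρ}).append (h.interval.map_insert ρ) ?_
    rintro x ⟨b, hb, hxb⟩ - c hc
    obtain rfl := List.mem_singleton.1 hb
    obtain rfl := Finset.mem_singleton.1 hxb
    simp only [List.singleton_append, List.mem_cons, List.mem_map] at hc
    rcases hc with rfl | ⟨c, -, rfl⟩
    · exact Finset.mem_singleton_self x
    · exact Finset.mem_insert_self x c

theorem IsPathDecompOn.union [DecidableEq V] (h₁ : G.IsPathDecompOn A L₁)
    (h₂ : G.IsPathDecompOn B L₂) (hAB : Disjoint A B) (hadj : ∀ u ∈ A, ∀ w ∈ B, ¬ G.Adj u w) :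
    G.IsPathDecompOn (A ∪ B) (L₁ ++ L₂) where
  subset b hb := (List.mem_append.1 hb).elim
    (fun hb => (h₁.subset b hb).trans Finset.subset_union_left)
    (fun hb => (h₂.subset b hb).trans Finset.subset_union_right)
  cov_vert x hx := (Finset.mem_union.1 hx).elim
    (fun hx => (h₁.cov_vert x hx).imp fun _ ⟨hb, hxb⟩ => ⟨List.mem_append_left _ hb, hxb⟩)
    (fun hx => (h₂.cov_vert x hx).imp fun _ ⟨hb, hxb⟩ => ⟨List.mem_append_right _ hb, hxb⟩)
  cov_edge u w huw hu hw := by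
    rcases Finset.mem_union.1 hu with hu | hu <;> rcases Finset.mem_union.1 hw with hw | hw
    · exact (h₁.cov_edge huw hu hw).imp fun _ ⟨hb, hub⟩ => ⟨List.mem_append_left _ hb, hub⟩
    · exact absurd huw (hadj u hu w hw)
    · exact absurd huw.symm (hadj w hw u hu)
    · exact (h₂.cov_edge huw hu hw).imp fun _ ⟨hb, hub⟩ => ⟨List.mem_append_right _ hb, hub⟩
  interval := by
    refine h₁.interval.append h₂.interval ?_
    rintro x ⟨b₁, hb₁, hx₁⟩ ⟨b₂, hb₂, hx₂⟩
    exact absurd (h₂.subset b₂ hb₂ hx₂) (Finset.disjoint_left.1 hAB (h₁.subset b₁ hb₁ hx₁))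

theorem IsPathDecompOn.pwLE [Fintype V] {w : ℕ} (h : G.IsPathDecompOn Finset.univ L)
    (hL : L ≠ []) (hw : ∀ b ∈ L, b.card ≤ w + 1) : pwLE G w := by
  have hlen : 0 < L.length := List.length_pos_iff.2 hL
  have index : ∀ b ∈ L, ∃ i : Fin (L.length - 1 + 1), L.getD i ∅ = b := fun b hb =>
    let ⟨i, hi, hib⟩ := List.exists_getD_eq hb
    ⟨⟨i, by omega⟩, hib⟩
  refine ⟨⟨L.length - 1, fun i => L.getD i ∅, fun u v huv => ?_, fun x => ?_,
    fun x i j k hij hjk => h.interval hij hjk⟩, fun i => hw _ (List.getD_mem (by omega))⟩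
  · obtain ⟨b, hb, hub, hvb⟩ := h.cov_edge huv (Finset.mem_univ u) (Finset.mem_univ v)
    obtain ⟨i, rfl⟩ := index b hb
    exact ⟨i, hub, hvb⟩
  · obtain ⟨b, hb, hxb⟩ := h.cov_vert x (Finset.mem_univ x)
    obtain ⟨i, rfl⟩ := index b hb
    exact ⟨i, hxb⟩

end PathDecomposition

section ReachableIn

def ReachableIn (G : SimpleGraph V) (A : Finset V) (a b : V) : Prop :=
  ∃ p : G.Walk a b, ∀ y ∈ p.support, y ∈ A

variable {A : Finset V} {a b c : V}

theorem ReachableIn.refl (ha : a ∈ A) : G.ReachableIn A a a :=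
  ⟨.nil, by simpa using ha⟩

theorem ReachableIn.left_mem (h : G.ReachableIn A a b) : a ∈ A :=
  let ⟨p, hp⟩ := h
  hp a p.start_mem_support

theorem ReachableIn.right_mem (h : G.ReachableIn A a b) : b ∈ A :=
  let ⟨p, hp⟩ := h
  hp b p.end_mem_support

theorem ReachableIn.trans (h₁ : G.ReachableIn A a b) (h₂ : G.ReachableIn A b c) :
    G.ReachableIn A a c :=
  let ⟨p, hp⟩ := h₁
  let ⟨q, hq⟩ := h₂
  ⟨p.append q, fun y hy => ((p.mem_support_append_iff q).1 hy).elim (hp y) (hq y)⟩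

theorem ReachableIn.adj (h : G.ReachableIn A a b) (hbc : G.Adj b c) (hc : c ∈ A) :
    G.ReachableIn A a c :=
  h.trans ⟨hbc.toWalk, by simp [h.right_mem, hc]⟩

theorem reachableIn_of_mem_support [DecidableEq V] {p : G.Walk a b}
    (hp : ∀ y ∈ p.support, y ∈ A) {c : V} (hc : c ∈ p.support) :
    G.ReachableIn A a c ∧ G.ReachableIn A c b :=
  ⟨⟨p.takeUntil c hc, fun y hy => hp y (p.support_takeUntil_subset_support hc hy)⟩,
    ⟨p.dropUntil c hc, fun y hy => hp y (p.support_dropUntil_subset_support hc hy)⟩⟩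

noncomputable def componentIn (G : SimpleGraph V) (A : Finset V) (a : V) : Finset V := by
  classical exact A.filter (G.ReachableIn A a)

theorem mem_componentIn : b ∈ G.componentIn A a ↔ G.ReachableIn A a b := by
  classical
  simp only [componentIn, Finset.mem_filter, and_iff_right_iff_imp]
  exact ReachableIn.right_mem

theorem componentIn_subset : G.componentIn A a ⊆ A := fun _ hb =>
  (mem_componentIn.1 hb).right_mem

variable [DecidableEq V]

theorem ReachableIn.componentIn (h : G.ReachableIn A a b) :
    G.ReachableIn (G.componentIn A a) a b :=
  let ⟨p, hp⟩ := h
  ⟨p, fun _ hy => mem_componentIn.2 (reachableIn_of_mem_support hp hy).1⟩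

theorem ReachableIn.sdiff_componentIn (h : G.ReachableIn A a b) (hcb : ¬ G.ReachableIn A c b) :
    G.ReachableIn (A \ G.componentIn A c) a b :=
  let ⟨p, hp⟩ := h
  ⟨p, fun y hy => Finset.mem_sdiff.2 ⟨hp y hy, fun hcy =>
    hcb ((mem_componentIn.1 hcy).trans (reachableIn_of_mem_support hp hy).2)⟩⟩

theorem ReachableIn.exists_adj_reachableIn_erase (h : G.ReachableIn A a b) (hab : a ≠ b) :
    ∃ c, G.Adj a c ∧ G.ReachableIn (A.erase a) c b := by
  obtain ⟨p, hp⟩ := h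
  have hpath : p.bypass.IsPath := p.bypass_isPath
  cases hq : p.bypass with
  | nil => exact absurd rfl hab
  | cons hac q =>
    rw [hq, Walk.cons_isPath_iff] at hpath
    refine ⟨_, hac, q, fun y hy => Finset.mem_erase.2 ⟨?_, hp y ?_⟩⟩
    · rintro rfl
      exact hpath.2 hy
    · exact p.support_bypass_subset_support (by rw [hq]; exact List.mem_cons_of_mem _ hy)

end ReachableIn

theorem IsPathDecompOn.of_componentIn [DecidableEq V] {A : Finset V} {ρ : V}
    {L₁ L₂ : List (Finset V)} (hρ : ρ ∈ A)
    (h₁ : G.IsPathDecompOn ((G.componentIn A ρ).erase ρ) L₁)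
    (h₂ : G.IsPathDecompOn (A \ G.componentIn A ρ) L₂) :
    G.IsPathDecompOn A (({ρ} :: L₁.map (insert ρ)) ++ L₂) := by
  have hρK : insert ρ ((G.componentIn A ρ).erase ρ) = G.componentIn A ρ :=
    Finset.insert_erase (mem_componentIn.2 (.refl hρ))
  have h := (h₁.insert_root ρ).union h₂
  rw [hρK, Finset.union_sdiff_of_subset componentIn_subset] at h
  exact h Finset.disjoint_sdiff fun u hu w hw huw => (Finset.mem_sdiff.1 hw).2 <|
    mem_componentIn.2 <| (mem_componentIn.1 hu).adj huw (Finset.mem_sdiff.1 hw).1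

theorem exists_isPathDecompOn_of_length_lt [DecidableEq V] (A : Finset V) (N : Set V) (d : ℕ)
    (hreach : ∀ a ∈ A, ∃ ρ ∈ N, G.ReachableIn A ρ a)
    (hlen : ∀ ρ ∈ N, ∀ a (p : G.Walk ρ a), p.IsPath → (∀ y ∈ p.support, y ∈ A) → p.length < d) :
    ∃ L, G.IsPathDecompOn A L ∧ ∀ b ∈ L, b.card ≤ d := by
  induction A using Finset.strongInduction generalizing N d with
  | H A ih =>
  rcases A.eq_empty_or_nonempty with rfl | ⟨a, ha⟩
  · exact ⟨[], isPathDecompOn_empty, by simp⟩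
  obtain ⟨ρ, hρN, hρa⟩ := hreach a ha
  set K := G.componentIn A ρ
  have hKA : K ⊆ A := componentIn_subset
  have hρK : ρ ∈ K := mem_componentIn.2 (.refl hρa.left_mem)
  have hd : 0 < d := hlen ρ hρN ρ .nil (by simp) (by simpa using hρa.left_mem)
  -- in `K` minus `ρ`, the neighbours of `ρ` take over as roots
  obtain ⟨L₁, hL₁, hL₁d⟩ := ih (K.erase ρ) ((Finset.erase_ssubset hρK).trans_subset hKA)
    {ρ' | G.Adj ρ ρ'} (d - 1)
    (fun b hb => (mem_componentIn.1 (Finset.mem_of_mem_erase hb)).componentIn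
      |>.exists_adj_reachableIn_erase (Finset.ne_of_mem_erase hb).symm)
    (by
      intro ρ' hρρ' b p hp hpK
      have hρp : ρ ∉ p.support := fun h => Finset.notMem_erase ρ K (hpK ρ h)
      have := hlen ρ hρN b (.cons hρρ' p) (hp.cons hρp) (by
        simpa using ⟨hKA hρK, fun y hy => hKA (Finset.mem_of_mem_erase (hpK y hy))⟩)
      rw [Walk.length_cons] at this
      omega)
  obtain ⟨L₂, hL₂, hL₂d⟩ := ih (A \ K) (Finset.sdiff_ssubset hKA ⟨ρ, hρK⟩) N d
    (fun b hb => by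
      obtain ⟨ρ', hρ'N, hρ'b⟩ := hreach b (Finset.mem_sdiff.1 hb).1
      exact ⟨ρ', hρ'N, hρ'b.sdiff_componentIn fun h => (Finset.mem_sdiff.1 hb).2
        (mem_componentIn.2 h)⟩)
    (fun ρ' hρ' b p hp hpA => hlen ρ' hρ' b p hp fun y hy => (Finset.mem_sdiff.1 (hpA y hy)).1)
  refine ⟨({ρ} :: L₁.map (insert ρ)) ++ L₂, .of_componentIn (hKA hρK) hL₁ hL₂, ?_⟩
  simp only [List.cons_append, List.mem_cons, List.mem_append, List.mem_map]
  rintro b (rfl | ⟨b, hb, rfl⟩ | hb)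
  · simpa using Nat.one_le_of_lt hd
  · exact (Finset.card_insert_le ρ b).trans (by have := hL₁d b hb; omega)
  · exact hL₂d b hb

theorem pwLE_of_forall_isPath_length_le [Fintype V] (hG : G.Connected) (r : V) (d : ℕ)
    (h : ∀ v (p : G.Walk r v), p.IsPath → p.length ≤ d) : pwLE G d := by
  classical
  obtain ⟨L, hL, hLd⟩ := exists_isPathDecompOn_of_length_lt (G := G) Finset.univ {r} (d + 1)
    (fun a _ => ⟨r, rfl, (hG r a).some, by simp⟩)
    (by rintro _ rfl a p hp -; exact Nat.lt_succ_of_le (h a p hp))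
  obtain ⟨b, hb, -⟩ := hL.cov_vert r (Finset.mem_univ r)
  exact hL.pwLE (List.ne_nil_of_mem hb) hLd

end SimpleGraph

theorem two_mul_pred_mul_sub_half_add_le_sq {q t : ℕ} (hq : 1 ≤ q) (hqt : q ≤ t) :
    2 * ((q - 1) * (t - (q + 1) / 2)) + t ≤ t ^ 2 := by
  obtain ⟨h, rfl | rfl⟩ : ∃ h, q = 2 * h ∨ q = 2 * h + 1 := ⟨q / 2, by omega⟩
  · obtain ⟨s, rfl⟩ := Nat.exists_eq_add_of_le hqt
    rw [show (2 * h + 1) / 2 = h by omega, show 2 * h + s - h = h + s by omega]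
    obtain ⟨i, rfl⟩ : ∃ i, h = i + 1 := ⟨h - 1, by omega⟩
    rw [show 2 * (i + 1) - 1 = 2 * i + 1 by omega]
    nlinarith
  · obtain ⟨s, rfl⟩ := Nat.exists_eq_add_of_le hqt
    rw [show (2 * h + 1 + 1) / 2 = h + 1 by omega, show 2 * h + 1 + s - (h + 1) = h + s by omega,
      Nat.add_sub_cancel]
    nlinarith

section KConn

variable {V : Type*} {G : SimpleGraph V}

open SimpleGraph Walk

theorem KConn.connected {k : ℕ} (h : KConn G k) (hk : 0 < k) : G.Connected := by
  have := h.2 ∅ Set.finite_empty (by simpa using hk)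
  rw [Set.compl_empty] at this
  exact this.map G.induceUnivIso.toHom G.induceUnivIso.surjective

theorem KConn.exists_isPath_notMem {k : ℕ} (h : KConn G k) (hk : 1 < k) {x u v : V}
    (hu : u ≠ x) (hv : v ≠ x) : ∃ p : G.Walk u v, p.IsPath ∧ x ∉ p.support := by
  classical
  have hconn := h.2 {x} (Set.finite_singleton x) (by simpa using hk)
  obtain ⟨p⟩ := hconn ⟨u, hu⟩ ⟨v, hv⟩
  let f := Embedding.induce (G := G) ({x}ᶜ : Set V)
  refine ⟨p.toPath.1.map f.toHom, p.toPath.2.map f.injective, fun hx => ?_⟩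
  obtain ⟨⟨y, hy⟩, -, hyx⟩ := List.mem_map.1 ((Walk.support_map _ _) ▸ hx)
  exact hy hyx

theorem KConn.exists_adj_ne (h : KConn G 2) {u v : V} (huv : u ≠ v) :
    ∃ w, G.Adj u w ∧ w ≠ v := by
  obtain ⟨c, hcu, hcv⟩ : ∃ c, c ≠ u ∧ c ≠ v := by
    by_contra! hc
    have : Nat.card V ≤ 2 := calc
      Nat.card V = (Set.univ : Set V).ncard := (Set.ncard_univ V).symm
      _ ≤ ({u, v} : Set V).ncard := Set.ncard_le_ncard (fun c _ => by
          by_cases hcu : c = u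
          · simp [hcu]
          · simp [hc c hcu]) (Set.toFinite _)
      _ = 2 := Set.ncard_pair huv
    exact absurd h.1 (by omega)
  obtain ⟨p, -, hvp⟩ := h.exists_isPath_notMem one_lt_two huv hcv
  cases p with
  | nil => exact absurd rfl hcu
  | cons huw p => exact ⟨_, huw, fun h => hvp (by simp [← h])⟩

theorem KConn.exists_isCycle_of_adj (h : KConn G 2) {u v : V} (huv : G.Adj u v) :
    ∃ x, ∃ C : G.Walk x x, C.IsCycle ∧ u ∈ C.support ∧ v ∈ C.support := by
  obtain ⟨w, huw, hwv⟩ := h.exists_adj_ne huv.ne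
  obtain ⟨P, hP, huP⟩ := h.exists_isPath_notMem one_lt_two huw.ne' huv.ne'
  refine ⟨u, (cons huw P).append huv.symm.toWalk,
    (hP.cons huP).isCycle_append (IsPath.of_adj _) ?_ ?_, by simp, by simp⟩
  · simpa [Adj.toWalk] using huP
  · have := not_nil_iff_lt_length.1 (not_nil_of_ne (p := P) hwv)
    left
    rw [length_cons]
    omega

theorem KConn.exists_isCycle_mem_mem (h : KConn G 2) {u v : V} (huv : u ≠ v) :
    ∃ x, ∃ C : G.Walk x x, C.IsCycle ∧ u ∈ C.support ∧ v ∈ C.support := by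
  classical
  obtain ⟨p⟩ := h.connected two_pos v u
  induction p with
  | nil => exact absurd rfl huv
  | @cons v w u hvw q ih =>
    by_cases hwu : w = u
    · subst hwu
      obtain ⟨x, C, hC, hv, hw⟩ := h.exists_isCycle_of_adj hvw
      exact ⟨x, C, hC, hw, hv⟩
    obtain ⟨x, C, hC, huC, hwC⟩ := ih (Ne.symm hwu)
    by_cases hvC : v ∈ C.support
    · exact ⟨x, C, hC, huC, hvC⟩
    obtain ⟨R, -, hwR⟩ := h.exists_isPath_notMem one_lt_two hvw.ne (Ne.symm hwu)
    exact hC.exists_isCycle_of_adj huC hwC hvw.symm hvC R hwR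

theorem KConn.two_mul_length_add_le_sq (h : KConn G 2) {t : ℕ}
    (hmax : ∀ x (C : G.Walk x x), C.IsCycle → C.length ≤ t) {u v : V} {P : G.Walk u v}
    (hP : P.IsPath) : 2 * P.length + t ≤ t ^ 2 := by
  classical
  rcases eq_or_ne u v with rfl | huv
  · rw [(isPath_iff_nil.1 hP).length_eq_zero]
    simpa using Nat.le_self_pow two_ne_zero t
  obtain ⟨x, C, hC, huC, hvC⟩ := h.exists_isCycle_mem_mem huv
  have hseg := hP.length_le_of_segments (S := {y | y ∈ C.support}) (m := t - (C.length + 1) / 2)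
    (fun a c Q hQ ha hc hint => by have := hC.length_add_half_le hmax hQ ha hc hint; omega) huC hvC
  have hcount : P.support.countP (· ∈ C.support) ≤ C.length := hP.countP_mem_support_le hC
  have hq := hC.three_le_length
  calc 2 * P.length + t
      ≤ 2 * ((C.length - 1) * (t - (C.length + 1) / 2)) + t := by
        gcongr
        exact hseg.trans (Nat.mul_le_mul_right _ (Nat.sub_le_sub_right hcount 1))
    _ ≤ t ^ 2 := two_mul_pred_mul_sub_half_add_le_sq (by omega) (hmax x C hC)

end KConn

/-- Every 2-connected graph with circumference `t` contains no
path with `⌈t²/2⌉` edges, and consequently has pathwidth at most `⌈t²/2⌉ - 1`. -/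
theorem stmt15 {V : Type} [Fintype V] (G : SimpleGraph V) (t : ℕ)
    (h2 : KConn G 2) (hc : CircumEq G t) :
    (¬ ∃ (u v : V) (p : G.Walk u v), p.IsPath ∧ p.length = (t ^ 2 + 1) / 2) ∧
    pwLE G ((t ^ 2 + 1) / 2 - 1) := by
  have hmax : ∀ x (C : G.Walk x x), C.IsCycle → C.length ≤ t :=
    fun x C hC => hc.1 _ ⟨x, C, hC, rfl⟩
  have : Nontrivial V := Finite.one_lt_card_iff_nontrivial.1 (by have := h2.1; omega)
  obtain ⟨u, v, huv⟩ := exists_pair_ne V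
  have ht : 1 ≤ t := by
    obtain ⟨x, C, hC, -, -⟩ := h2.exists_isCycle_mem_mem huv
    have := hC.three_le_length.trans (hmax x C hC)
    omega
  have hlt : ∀ {a b : V} {P : G.Walk a b}, P.IsPath → P.length < (t ^ 2 + 1) / 2 := fun hP => by
    have := h2.two_mul_length_add_le_sq hmax hP
    omega
  exact ⟨fun ⟨_, _, P, hP, hlen⟩ => (hlt hP).ne hlen,
    pwLE_of_forall_isPath_length_le (h2.connected two_pos) u _ fun _ P hP =>
      Nat.le_sub_one_of_lt (hlt hP)⟩
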